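/- Let f ∈ G be a bump whose support is bounded above in ℚ but not bounded below (respectively, bounded below but not above). Then there exists a real number a such that the support of f equals {q ∈ ℚ : q < a} (respectively, {q ∈ ℚ : a < q}). -/

import Mathlib

/-!
Two points moved by a bump lie in its one nontrivial orbital, and an orbital never crosses a
fixed point, so the support of a bump is order-convex. The support of any `f` is `f`-invariant,
hence has neither a greatest nor a least element. A convex subset of `ℚ` without greatest element
that is bounded above but not below is the set of rationals below its real supremum, and dually.
-/

open FirstOrder

/-- `G` is the group of all order-automorphisms of `(ℚ, <)` under composition. -/
abbrev G : Type := ℚ ≃o ℚ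

/-- The support of `f ∈ G`: the set of points moved by `f`. -/
def support (f : G) : Set ℚ := {a : ℚ | f a ≠ a}

/-- The orbital relation of `f`: `a ~_f b` iff `f^m a ≤ b ≤ f^n a` for some integers `m, n`. -/
def orbRel (f : G) (a b : ℚ) : Prop := ∃ m n : ℤ, (f ^ m) a ≤ b ∧ b ≤ (f ^ n) a

/-- An orbital of `f` is an equivalence class of the orbital relation of `f`. -/
def IsOrbital (f : G) (X : Set ℚ) : Prop := ∃ a : ℚ, X = {b : ℚ | orbRel f a b}

/-- An orbital is nontrivial if it contains a point moved by `f`. -/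
def IsNontrivialOrbital (f : G) (X : Set ℚ) : Prop :=
  IsOrbital f X ∧ ∃ a ∈ X, f a ≠ a

/-- A bump is a non-identity element of `G` with exactly one nontrivial orbital. -/
def IsBump (f : G) : Prop := f ≠ 1 ∧ ∃! X : Set ℚ, IsNontrivialOrbital f X

/-- `g` is a restriction of `f`: the support of `g` is contained in that of `f`, and
`g` agrees with `f` on the support of `g`. -/
def IsRestriction (g f : G) : Prop :=
  support g ⊆ support f ∧ ∀ a ∈ support g, g a = f a

namespace Set

theorem eq_setOf_coe_lt_sSup_of_ordConnected {s : Set ℚ} (hs : s.OrdConnected)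
    (hgt : ∀ q ∈ s, ∃ r ∈ s, q < r) (hbdd : BddAbove s) (hunb : ¬BddBelow s) :
    s = {q : ℚ | (q : ℝ) < sSup ((↑) '' s)} := by
  have hbdd' : BddAbove (((↑) : ℚ → ℝ) '' s) := Rat.cast_mono.map_bddAbove hbdd
  ext q
  refine ⟨fun hq => ?_, fun (hq : (q : ℝ) < _) => ?_⟩
  · obtain ⟨r, hr, hqr⟩ := hgt q hq
    exact (Rat.cast_lt.2 hqr).trans_le (le_csSup hbdd' (mem_image_of_mem _ hr))
  · have hne : s.Nonempty := nonempty_iff_ne_empty.2 fun h => hunb (h ▸ bddBelow_empty)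
    obtain ⟨_, ⟨r, hr, rfl⟩, hqr⟩ := exists_lt_of_lt_csSup (hne.image _) hq
    obtain ⟨t, ht, htq⟩ := not_bddBelow_iff.1 hunb q
    exact hs.out ht hr ⟨htq.le, (Rat.cast_lt.1 hqr).le⟩

theorem eq_setOf_sInf_lt_coe_of_ordConnected {s : Set ℚ} (hs : s.OrdConnected)
    (hlt : ∀ q ∈ s, ∃ r ∈ s, r < q) (hbdd : BddBelow s) (hunb : ¬BddAbove s) :
    s = {q : ℚ | sInf ((↑) '' s) < (q : ℝ)} := by
  have hbdd' : BddBelow (((↑) : ℚ → ℝ) '' s) := Rat.cast_mono.map_bddBelow hbdd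
  ext q
  refine ⟨fun hq => ?_, fun (hq : _ < (q : ℝ)) => ?_⟩
  · obtain ⟨r, hr, hrq⟩ := hlt q hq
    exact (csInf_le hbdd' (mem_image_of_mem _ hr)).trans_lt (Rat.cast_lt.2 hrq)
  · have hne : s.Nonempty := nonempty_iff_ne_empty.2 fun h => hunb (h ▸ bddAbove_empty)
    obtain ⟨_, ⟨r, hr, rfl⟩, hrq⟩ := exists_lt_of_csInf_lt (hne.image _) hq
    obtain ⟨t, ht, hqt⟩ := not_bddAbove_iff.1 hunb q
    exact hs.out hr ht ⟨(Rat.cast_lt.1 hrq).le, hqt.le⟩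

end Set

theorem apply_mem_support_iff (f : G) {q : ℚ} : f q ∈ support f ↔ q ∈ support f :=
  f.injective.ne_iff

theorem inv_apply_mem_support_iff (f : G) {q : ℚ} : f⁻¹ q ∈ support f ↔ q ∈ support f := by
  rw [← apply_mem_support_iff, RelIso.apply_inv_self]

theorem exists_gt_mem_support {f : G} {q : ℚ} (hq : q ∈ support f) :
    ∃ r ∈ support f, q < r := by
  rcases (Ne.symm hq).lt_or_gt with h | h
  · exact ⟨f q, (apply_mem_support_iff f).2 hq, h⟩
  · refine ⟨f⁻¹ q, (inv_apply_mem_support_iff f).2 hq, ?_⟩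
    simpa using (f⁻¹).strictMono h

theorem exists_lt_mem_support {f : G} {q : ℚ} (hq : q ∈ support f) :
    ∃ r ∈ support f, r < q := by
  rcases (Ne.symm hq).lt_or_gt with h | h
  · refine ⟨f⁻¹ q, (inv_apply_mem_support_iff f).2 hq, ?_⟩
    simpa using (f⁻¹).strictMono h
  · exact ⟨f q, (apply_mem_support_iff f).2 hq, h⟩

theorem zpow_apply_eq_self_of_apply_eq_self {f : G} {c : ℚ} (hc : f c = c) (n : ℤ) :
    (f ^ n) c = c := by
  let toPerm : G →* Equiv.Perm ℚ :=
    { toFun := RelIso.toEquiv, map_one' := rfl, map_mul' := fun _ _ => rfl }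
  change toPerm (f ^ n) c = c
  rw [map_zpow]
  exact Equiv.Perm.zpow_apply_eq_self_of_apply_eq_self hc n

theorem eq_of_orbRel_of_apply_eq_self {f : G} {a c : ℚ} (h : orbRel f a c) (hc : f c = c) :
    a = c := by
  obtain ⟨m, n, hm, hn⟩ := h
  rcases lt_trichotomy a c with hac | hac | hac
  · have := (f ^ n).strictMono hac
    rw [zpow_apply_eq_self_of_apply_eq_self hc] at this
    exact absurd hn this.not_ge
  · exact hac
  · have := (f ^ m).strictMono hac
    rw [zpow_apply_eq_self_of_apply_eq_self hc] at this
    exact absurd hm this.not_ge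

theorem mem_support_of_orbRel {f : G} {a c : ℚ} (ha : a ∈ support f) (h : orbRel f a c) :
    c ∈ support f := fun hc => ha (eq_of_orbRel_of_apply_eq_self h hc ▸ hc)

theorem orbRel_refl (f : G) (a : ℚ) : orbRel f a a := ⟨0, 0, le_rfl, le_rfl⟩

theorem IsBump.orbRel_of_mem_support {f : G} (hb : IsBump f) {a c : ℚ} (ha : a ∈ support f)
    (hc : c ∈ support f) : orbRel f a c := by
  have horbital : ∀ x ∈ support f, IsNontrivialOrbital f {y | orbRel f x y} :=
    fun x hx => ⟨⟨x, rfl⟩, x, orbRel_refl f x, hx⟩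
  exact (Set.ext_iff.1 (hb.2.unique (horbital a ha) (horbital c hc)) c).2 (orbRel_refl f c)

theorem IsBump.ordConnected_support {f : G} (hb : IsBump f) : (support f).OrdConnected := by
  refine ⟨fun a ha c hc b ⟨hab, hbc⟩ => mem_support_of_orbRel ha ?_⟩
  obtain ⟨-, n, -, hn⟩ := hb.orbRel_of_mem_support ha hc
  exact ⟨0, n, hab, hbc.trans hn⟩

/-- A bump whose support is bounded above but not below has support `{q : ℚ | q < a}` for some
real `a`; respectively, a bump whose support is bounded below but not above has support
`{q : ℚ | a < q}` for some real `a`. -/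
theorem cofinal_bump_support
    (f : G) (hb : IsBump f) :
    (BddAbove (support f) ∧ ¬ BddBelow (support f) →
      ∃ a : ℝ, support f = {q : ℚ | (q : ℝ) < a}) ∧
    (BddBelow (support f) ∧ ¬ BddAbove (support f) →
      ∃ a : ℝ, support f = {q : ℚ | a < (q : ℝ)}) :=
  ⟨fun ⟨hbdd, hunb⟩ => ⟨_, Set.eq_setOf_coe_lt_sSup_of_ordConnected hb.ordConnected_support
      (fun _ => exists_gt_mem_support) hbdd hunb⟩,
    fun ⟨hbdd, hunb⟩ => ⟨_, Set.eq_setOf_sInf_lt_coe_of_ordConnected hb.ordConnected_support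
      (fun _ => exists_lt_mem_support) hbdd hunb⟩⟩
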